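/- If 1 < p < 2d/(d+1) then the radial extremal function F₀(r) = C·(r^{1-d}V_d(r))^{1/(p-1)}, with V_d(r) = (2π)^{d/2} J_{(d-2)/2}(r) r^{d/2}, satisfies ∫_0^∞ r^{d-1} |F₀(r)|^p dr < ∞. -/

import Mathlib

open MeasureTheory Real Set

/-- The Bessel function of the first kind of order `ν`, via its power series. -/
noncomputable def besselJ (ν x : ℝ) : ℝ :=
  ∑' m : ℕ, (-1 : ℝ) ^ m / (m.factorial * Real.Gamma (m + ν + 1)) *
    (x / 2) ^ (2 * m) * (x / 2) ^ ν

/-- The kernel `V_d(r) = (2π)^{d/2} J_{(d-2)/2}(r) r^{d/2}`. -/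
noncomputable def kernelV (d : ℕ) (r : ℝ) : ℝ :=
  (2 * π) ^ ((d : ℝ) / 2) * besselJ (((d : ℝ) - 2) / 2) r * r ^ ((d : ℝ) / 2)

noncomputable def bb (ν : ℝ) (m : ℕ) : ℝ :=
  (-1) ^ m / (m.factorial * Real.Gamma (m + ν + 1)) / 4 ^ m

lemma Gamma_arg_pos (ν : ℝ) (hν : 0 ≤ ν) (m : ℕ) : (0:ℝ) < (m:ℝ) + ν + 1 := by
  have : (0:ℝ) ≤ (m:ℝ) := Nat.cast_nonneg m
  linarith

lemma bb_succ (ν : ℝ) (hν : 0 ≤ ν) (m : ℕ) :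
    bb ν (m+1) = -bb ν m / (4 * ((m:ℝ)+1) * ((m:ℝ)+ν+1)) := by
  have hpos := Gamma_arg_pos ν hν m
  have hg : (0:ℝ) < Real.Gamma ((m:ℝ)+ν+1) := Real.Gamma_pos_of_pos hpos
  have h2 : Real.Gamma (((m+1:ℕ):ℝ) + ν + 1) = ((m:ℝ)+ν+1) * Real.Gamma ((m:ℝ)+ν+1) := by
    have h1 : ((m+1:ℕ):ℝ) + ν + 1 = ((m:ℝ)+ν+1) + 1 := by push_cast; ring
    rw [h1, Real.Gamma_add_one (ne_of_gt hpos)]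
  simp only [bb, h2, Nat.factorial_succ, pow_succ]
  have hf : ((m.factorial:ℝ)) ≠ 0 := by positivity
  push_cast
  field_simp

lemma summable_master (ν : ℝ) (hν : 0 ≤ ν) (k : ℕ) (R : ℝ) :
    Summable (fun m : ℕ => (m:ℝ)^k * |bb ν m| * R ^ (2*m)) := by
  have hR2 : (0:ℝ) ≤ R^2 := sq_nonneg R
  apply summable_of_ratio_norm_eventually_le (r := 1/2) (by norm_num)
  filter_upwards [Filter.eventually_ge_atTop (⌈(2:ℝ)^(k+1) * R^2⌉₊ + 1)] with m hm
  have hm1 : 1 ≤ m := le_trans (by omega) hm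
  have hmN : ⌈(2:ℝ)^(k+1) * R^2⌉₊ ≤ m := by omega
  have hmc : (2:ℝ)^(k+1) * R^2 ≤ (m:ℝ) := by
    calc (2:ℝ)^(k+1)*R^2 ≤ (⌈(2:ℝ)^(k+1) * R^2⌉₊ : ℝ) := Nat.le_ceil _
    _ ≤ (m:ℝ) := Nat.cast_le.mpr hmN
  have hpos := Gamma_arg_pos ν hν m
  have hm0 : (0:ℝ) < (m:ℝ) := by exact_mod_cast hm1
  have hm1' : (1:ℝ) ≤ (m:ℝ) := by exact_mod_cast hm1
  have hD : (0:ℝ) < 4 * ((m:ℝ)+1) * ((m:ℝ)+ν+1) := by nlinarith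
  have hb : |bb ν (m+1)| = |bb ν m| / (4 * ((m:ℝ)+1) * ((m:ℝ)+ν+1)) := by
    rw [bb_succ ν hν m, abs_div, abs_neg, abs_of_pos hD]
  have hnn : ∀ j : ℕ, (0:ℝ) ≤ (j:ℝ)^k * |bb ν j| * R ^ (2*j) := by
    intro j
    have h1 : R ^ (2*j) = (R^2)^j := by rw [pow_mul]
    have : (0:ℝ) ≤ R ^ (2*j) := by rw [h1]; positivity
    positivity
  rw [Real.norm_eq_abs, Real.norm_eq_abs, abs_of_nonneg (hnn _), abs_of_nonneg (hnn _)]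
  have hpow1 : ((m:ℝ)+1)^k ≤ 2^k * (m:ℝ)^k := by
    rw [← mul_pow]
    apply pow_le_pow_left₀ (by positivity)
    linarith
  have hRnn : (0:ℝ) ≤ R ^ (2*m) := by
    have h1 : R ^ (2*m) = (R^2)^m := by rw [pow_mul]
    rw [h1]; positivity
  have hbnn : (0:ℝ) ≤ |bb ν m| := abs_nonneg _
  have key : ((m:ℝ)+1)^k * R^2 ≤ 2 * (m:ℝ)^k * (((m:ℝ)+1) * ((m:ℝ)+ν+1)) := by
    calc ((m:ℝ)+1)^k * R^2 ≤ (2^k * (m:ℝ)^k) * R^2 :=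
          mul_le_mul_of_nonneg_right hpow1 hR2
    _ ≤ (2^k * (m:ℝ)^k) * ((m:ℝ) / 2^(k+1)) := by
          apply mul_le_mul_of_nonneg_left _ (by positivity)
          rw [le_div_iff₀ (by positivity)]
          calc R^2 * 2^(k+1) = 2^(k+1) * R^2 := by ring
          _ ≤ (m:ℝ) := hmc
    _ = (m:ℝ)^k * (m:ℝ) / 2 := by field_simp [pow_succ]; ring
    _ ≤ 2 * (m:ℝ)^k * (((m:ℝ)+1) * ((m:ℝ)+ν+1)) := by
          have h1 : (m:ℝ) ≤ ((m:ℝ)+1) * ((m:ℝ)+ν+1) := by nlinarith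
          have h2 : (0:ℝ) ≤ (m:ℝ)^k := by positivity
          nlinarith
  push_cast
  rw [hb, show ((m:ℝ)+1)^k * (|bb ν m| / (4 * ((m:ℝ)+1) * ((m:ℝ)+ν+1))) * R^(2*(m+1))
      = (((m:ℝ)+1)^k * |bb ν m| * (R^(2*m) * R^2)) / (4 * ((m:ℝ)+1) * ((m:ℝ)+ν+1)) from by
        rw [show 2*(m+1) = 2*m + 2 from by ring, pow_add]; ring,
    div_le_iff₀ hD]
  calc ((m:ℝ)+1)^k * |bb ν m| * (R ^ (2*m) * R^2)
      = (((m:ℝ)+1)^k * R^2) * (|bb ν m| * R^(2*m)) := by ring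
    _ ≤ (2 * (m:ℝ)^k * (((m:ℝ)+1) * ((m:ℝ)+ν+1))) * (|bb ν m| * R^(2*m)) :=
        mul_le_mul_of_nonneg_right key (by positivity)
    _ = 1/2 * ((m:ℝ)^k * |bb ν m| * R^(2*m)) * (4 * ((m:ℝ)+1) * ((m:ℝ)+ν+1)) := by ring

noncomputable def gg (ν x : ℝ) : ℝ := ∑' m : ℕ, bb ν m * x ^ (2*m)
noncomputable def gg1 (ν x : ℝ) : ℝ := ∑' m : ℕ, bb ν m * ((2*m : ℕ):ℝ) * x ^ (2*m-1)
noncomputable def gg2 (ν x : ℝ) : ℝ :=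
  ∑' m : ℕ, bb ν m * ((2*m : ℕ):ℝ) * ((2*m-1 : ℕ):ℝ) * x ^ (2*m-2)

lemma abs_pow_le (x : ℝ) (n j : ℕ) (h : n ≤ j) (hx : |x| ≤ 1 + |x|) : True := trivial

lemma summable_gg (ν : ℝ) (hν : 0 ≤ ν) (x : ℝ) :
    Summable (fun m : ℕ => bb ν m * x ^ (2*m)) := by
  have h' : Summable (fun m : ℕ => |bb ν m| * |x| ^ (2*m)) := by
    simpa using summable_master ν hν 0 |x|
  apply Summable.of_norm_bounded h'
  intro m
  rw [Real.norm_eq_abs, abs_mul, abs_pow]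

lemma summable_gg1 (ν : ℝ) (hν : 0 ≤ ν) (x : ℝ) :
    Summable (fun m : ℕ => bb ν m * ((2*m : ℕ):ℝ) * x ^ (2*m-1)) := by
  have hR : (1:ℝ) ≤ 1 + |x| := by simp [abs_nonneg]
  apply Summable.of_norm_bounded ((summable_master ν hν 1 (1+|x|)).mul_left 2)
  intro m
  rw [Real.norm_eq_abs, abs_mul, abs_mul]
  have h1 : |x| ^ (2*m-1) ≤ (1+|x|) ^ (2*m) := by
    calc |x| ^ (2*m-1) ≤ (1+|x|) ^ (2*m-1) :=
          pow_le_pow_left₀ (abs_nonneg x) (by linarith [abs_nonneg x]) _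
    _ ≤ (1+|x|) ^ (2*m) := pow_le_pow_right₀ hR (by omega)
  calc |bb ν m| * |((2*m:ℕ):ℝ)| * |x ^ (2*m-1)|
      = |bb ν m| * (2*m) * |x| ^ (2*m-1) := by
        rw [abs_pow]; congr 2; simp [abs_of_nonneg]
    _ ≤ |bb ν m| * (2*m) * (1+|x|) ^ (2*m) := by
        apply mul_le_mul_of_nonneg_left h1 (by positivity)
    _ = 2 * ((m:ℝ)^1 * |bb ν m| * (1+|x|) ^ (2*m)) := by push_cast; ring

lemma summable_gg2 (ν : ℝ) (hν : 0 ≤ ν) (x : ℝ) :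
    Summable (fun m : ℕ => bb ν m * ((2*m : ℕ):ℝ) * ((2*m-1 : ℕ):ℝ) * x ^ (2*m-2)) := by
  have hR : (1:ℝ) ≤ 1 + |x| := by simp [abs_nonneg]
  apply Summable.of_norm_bounded ((summable_master ν hν 2 (1+|x|)).mul_left 4)
  intro m
  rw [Real.norm_eq_abs, abs_mul, abs_mul, abs_mul]
  have h1 : |x| ^ (2*m-2) ≤ (1+|x|) ^ (2*m) := by
    calc |x| ^ (2*m-2) ≤ (1+|x|) ^ (2*m-2) :=
          pow_le_pow_left₀ (abs_nonneg x) (by linarith [abs_nonneg x]) _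
    _ ≤ (1+|x|) ^ (2*m) := pow_le_pow_right₀ hR (by omega)
  have h2 : ((2*m-1:ℕ):ℝ) ≤ 2*m := by
    have : (2*m-1:ℕ) ≤ 2*m := by omega
    calc ((2*m-1:ℕ):ℝ) ≤ ((2*m:ℕ):ℝ) := Nat.cast_le.mpr this
    _ = 2*m := by push_cast; ring
  calc |bb ν m| * |((2*m:ℕ):ℝ)| * |((2*m-1:ℕ):ℝ)| * |x ^ (2*m-2)|
      = |bb ν m| * (2*m) * ((2*m-1:ℕ):ℝ) * |x| ^ (2*m-2) := by
        rw [abs_pow]; congr 2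
        · congr 1; simp [abs_of_nonneg]
        · simp [abs_of_nonneg]
    _ ≤ |bb ν m| * (2*m) * (2*m) * (1+|x|) ^ (2*m) := by
        have : |bb ν m| * (2*m) * ((2*m-1:ℕ):ℝ) ≤ |bb ν m| * (2*m) * (2*m) :=
          mul_le_mul_of_nonneg_left h2 (by positivity)
        have hpow : (0:ℝ) ≤ (1+|x|)^(2*m) := by positivity
        calc |bb ν m| * (2*m) * ((2*m-1:ℕ):ℝ) * |x|^(2*m-2)
            ≤ |bb ν m| * (2*m) * ((2*m-1:ℕ):ℝ) * (1+|x|)^(2*m) := by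
              apply mul_le_mul_of_nonneg_left h1
              positivity
          _ ≤ |bb ν m| * (2*m) * (2*m) * (1+|x|)^(2*m) :=
              mul_le_mul_of_nonneg_right this hpow
    _ = 4 * ((m:ℝ)^2 * |bb ν m| * (1+|x|) ^ (2*m)) := by push_cast; ring

lemma hasDerivAt_gg (ν : ℝ) (hν : 0 ≤ ν) (x : ℝ) :
    HasDerivAt (gg ν) (gg1 ν x) x := by
  have hR : (1:ℝ) ≤ 1 + |x| := by simp [abs_nonneg]
  have hx : x ∈ Metric.ball (0:ℝ) (1 + |x|) := by
    rw [Metric.mem_ball, Real.dist_eq, sub_zero]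
    linarith [abs_nonneg x]
  unfold gg gg1
  apply hasDerivAt_tsum_of_isPreconnected
    ((summable_master ν hν 1 (1+|x|)).mul_left 2)
    Metric.isOpen_ball (convex_ball (0:ℝ) (1+|x|)).isPreconnected
    (g := fun m z => bb ν m * z ^ (2*m))
    (g' := fun m y => bb ν m * ((2*m : ℕ):ℝ) * y ^ (2*m-1))
    (y₀ := 0) ?_ ?_ ?_ ?_ hx
  · intro m y _
    simpa [mul_assoc] using (hasDerivAt_pow (2*m) y).const_mul (bb ν m)
  · intro m y hy
    rw [Metric.mem_ball, Real.dist_eq, sub_zero] at hy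
    rw [Real.norm_eq_abs, abs_mul, abs_mul]
    have h1 : |y| ^ (2*m-1) ≤ (1+|x|) ^ (2*m) := by
      calc |y| ^ (2*m-1) ≤ (1+|x|) ^ (2*m-1) :=
            pow_le_pow_left₀ (abs_nonneg y) hy.le _
      _ ≤ (1+|x|) ^ (2*m) := pow_le_pow_right₀ hR (by omega)
    calc |bb ν m| * |((2*m:ℕ):ℝ)| * |y ^ (2*m-1)|
        = |bb ν m| * (2*m) * |y| ^ (2*m-1) := by
          rw [abs_pow]; congr 2; simp [abs_of_nonneg]
      _ ≤ |bb ν m| * (2*m) * (1+|x|) ^ (2*m) := by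
          apply mul_le_mul_of_nonneg_left h1 (by positivity)
      _ = 2 * ((m:ℝ)^1 * |bb ν m| * (1+|x|) ^ (2*m)) := by push_cast; ring
  · simp [Metric.mem_ball, Real.dist_eq]
    linarith [abs_nonneg x]
  · exact summable_gg ν hν 0

lemma hasDerivAt_gg1 (ν : ℝ) (hν : 0 ≤ ν) (x : ℝ) :
    HasDerivAt (gg1 ν) (gg2 ν x) x := by
  have hR : (1:ℝ) ≤ 1 + |x| := by simp [abs_nonneg]
  have hx : x ∈ Metric.ball (0:ℝ) (1 + |x|) := by
    rw [Metric.mem_ball, Real.dist_eq, sub_zero]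
    linarith [abs_nonneg x]
  unfold gg1 gg2
  apply hasDerivAt_tsum_of_isPreconnected
    ((summable_master ν hν 2 (1+|x|)).mul_left 4)
    Metric.isOpen_ball (convex_ball (0:ℝ) (1+|x|)).isPreconnected
    (g := fun m z => bb ν m * ((2*m : ℕ):ℝ) * z ^ (2*m-1))
    (g' := fun m y => bb ν m * ((2*m : ℕ):ℝ) * ((2*m-1 : ℕ):ℝ) * y ^ (2*m-2))
    (y₀ := 0) ?_ ?_ ?_ ?_ hx
  · intro m y _
    have h := (hasDerivAt_pow (2*m-1) y).const_mul (bb ν m * ((2*m : ℕ):ℝ))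
    have he : 2*m-1-1 = 2*m-2 := by omega
    rw [he] at h
    simpa [mul_assoc] using h
  · intro m y hy
    rw [Metric.mem_ball, Real.dist_eq, sub_zero] at hy
    rw [Real.norm_eq_abs, abs_mul, abs_mul, abs_mul]
    have h1 : |y| ^ (2*m-2) ≤ (1+|x|) ^ (2*m) := by
      calc |y| ^ (2*m-2) ≤ (1+|x|) ^ (2*m-2) :=
            pow_le_pow_left₀ (abs_nonneg y) hy.le _
      _ ≤ (1+|x|) ^ (2*m) := pow_le_pow_right₀ hR (by omega)
    have h2 : ((2*m-1:ℕ):ℝ) ≤ 2*m := by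
      have h3 : (2*m-1:ℕ) ≤ 2*m := by omega
      calc ((2*m-1:ℕ):ℝ) ≤ ((2*m:ℕ):ℝ) := Nat.cast_le.mpr h3
      _ = 2*m := by push_cast; ring
    have hpow : (0:ℝ) ≤ (1+|x|)^(2*m) := by positivity
    calc |bb ν m| * |((2*m:ℕ):ℝ)| * |((2*m-1:ℕ):ℝ)| * |y ^ (2*m-2)|
        = |bb ν m| * (2*m) * ((2*m-1:ℕ):ℝ) * |y| ^ (2*m-2) := by
          rw [abs_pow]; congr 2
          · congr 1; simp [abs_of_nonneg]
          · simp [abs_of_nonneg]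
      _ ≤ |bb ν m| * (2*m) * ((2*m-1:ℕ):ℝ) * (1+|x|)^(2*m) := by
          apply mul_le_mul_of_nonneg_left h1
          positivity
      _ ≤ |bb ν m| * (2*m) * (2*m) * (1+|x|)^(2*m) := by
          apply mul_le_mul_of_nonneg_right _ hpow
          exact mul_le_mul_of_nonneg_left h2 (by positivity)
      _ = 4 * ((m:ℝ)^2 * |bb ν m| * (1+|x|) ^ (2*m)) := by push_cast; ring
  · simp [Metric.mem_ball, Real.dist_eq]
    linarith [abs_nonneg x]
  · exact summable_gg1 ν hν 0

lemma continuous_gg (ν : ℝ) (hν : 0 ≤ ν) : Continuous (gg ν) :=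
  continuous_iff_continuousAt.mpr fun x => (hasDerivAt_gg ν hν x).continuousAt

lemma gg_ode (ν : ℝ) (hν : 0 ≤ ν) (x : ℝ) :
    x^2 * gg2 ν x + (2*ν+1) * x * gg1 ν x + x^2 * gg ν x = 0 := by
  have S0 := summable_gg ν hν x
  have S1 := summable_gg1 ν hν x
  have S2 := summable_gg2 ν hν x
  set t0 : ℕ → ℝ := fun m => bb ν m * x ^ (2*m) with ht0
  set A : ℕ → ℝ := fun m => x^2 * (bb ν m * ((2*m : ℕ):ℝ) * ((2*m-1 : ℕ):ℝ) * x ^ (2*m-2))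
      + (2*ν+1) * x * (bb ν m * ((2*m : ℕ):ℝ) * x ^ (2*m-1)) with hA
  have hAsum : Summable A := (S2.mul_left (x^2)).add (S1.mul_left ((2*ν+1)*x))
  have h1 : x^2 * gg2 ν x + (2*ν+1) * x * gg1 ν x = ∑' m, A m := by
    unfold gg2 gg1
    rw [← tsum_mul_left, ← tsum_mul_left, ← Summable.tsum_add (S2.mul_left (x^2)) (S1.mul_left ((2*ν+1)*x))]
  have hA0 : A 0 = 0 := by simp [hA]
  have h2 : ∑' m, A m = ∑' m, A (m+1) := by
    rw [Summable.tsum_eq_zero_add hAsum, hA0, zero_add]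
  have h3 : x^2 * gg ν x = ∑' m, x^2 * t0 m := by
    unfold gg; rw [← tsum_mul_left]
  have hterm : ∀ m : ℕ, A (m+1) + x^2 * t0 m = 0 := by
    intro m
    have hm0 : (0:ℝ) ≤ (m:ℝ) := Nat.cast_nonneg m
    have hD : (4*((m:ℝ)+1)*((m:ℝ)+ν+1)) ≠ 0 := by nlinarith
    have hb := bb_succ ν hν m
    have e1 : 2*(m+1)-1 = 2*m+1 := by omega
    have e2 : 2*(m+1)-2 = 2*m := by omega
    simp only [hA, ht0, e1, e2]
    rw [hb]
    push_cast
    field_simp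
    ring
  rw [h1, h2, h3, ← Summable.tsum_add ((summable_nat_add_iff 1).mpr hAsum) (S0.mul_left (x^2))]
  calc ∑' m, (A (m+1) + x^2 * t0 m) = ∑' (_ : ℕ), (0:ℝ) := by
        congr 1; funext m; exact hterm m
    _ = 0 := tsum_zero

noncomputable def uu (ν x : ℝ) : ℝ := x ^ (ν + 1/2) * gg ν x
noncomputable def vv (ν x : ℝ) : ℝ :=
  (ν+1/2) * x ^ (ν - 1/2) * gg ν x + x ^ (ν + 1/2) * gg1 ν x
noncomputable def ww (ν x : ℝ) : ℝ :=
  (ν+1/2)*(ν-1/2) * x ^ (ν - 3/2) * gg ν x + 2*(ν+1/2) * x ^ (ν - 1/2) * gg1 ν x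
    + x ^ (ν + 1/2) * gg2 ν x

lemma hasDerivAt_uu (ν : ℝ) (hν : 0 ≤ ν) {x : ℝ} (hx : 0 < x) :
    HasDerivAt (uu ν) (vv ν x) x := by
  have h := (Real.hasDerivAt_rpow_const (p := ν + 1/2) (Or.inl hx.ne')).mul
    (hasDerivAt_gg ν hν x)
  unfold uu vv
  refine h.congr_deriv ?_
  rw [show ν + 1/2 - 1 = ν - 1/2 by ring]

lemma hasDerivAt_vv (ν : ℝ) (hν : 0 ≤ ν) {x : ℝ} (hx : 0 < x) :
    HasDerivAt (vv ν) (ww ν x) x := by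
  have h1 := (((Real.hasDerivAt_rpow_const (p := ν - 1/2) (Or.inl hx.ne')).const_mul
    (ν+1/2)).mul (hasDerivAt_gg ν hν x))
  have h2 := (Real.hasDerivAt_rpow_const (p := ν + 1/2) (Or.inl hx.ne')).mul
    (hasDerivAt_gg1 ν hν x)
  have h := h1.add h2
  unfold vv ww
  refine h.congr_deriv ?_
  rw [show ν - 1/2 - 1 = ν - 3/2 by ring, show ν + 1/2 - 1 = ν - 1/2 by ring]
  ring

lemma uu_ode (ν : ℝ) (hν : 0 ≤ ν) {x : ℝ} (hx : 0 < x) :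
    ww ν x = -(1 + (1/4 - ν^2)/x^2) * uu ν x := by
  have hode := gg_ode ν hν x
  have hx0 : x ≠ 0 := hx.ne'
  have e1 : x ^ (ν + 1/2) = x ^ (ν - 3/2) * x^2 := by
    rw [← Real.rpow_natCast x 2, ← Real.rpow_add hx]
    norm_num
    ring_nf
  have e2 : x ^ (ν - 1/2) = x ^ (ν - 3/2) * x := by
    nth_rewrite 3 [← Real.rpow_one x]
    rw [← Real.rpow_add hx]
    ring_nf
  have hgg2 : gg2 ν x = -((2*ν+1)*x*gg1 ν x + x^2*gg ν x)/x^2 := by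
    rw [eq_div_iff (pow_ne_zero 2 hx0)]
    linarith [hode]
  unfold ww uu
  rw [e1, e2, hgg2]
  field_simp
  ring

lemma uu_bound (ν : ℝ) (hν : 0 ≤ ν) :
    ∃ K : ℝ, 0 ≤ K ∧ ∀ x : ℝ, 1 ≤ x → |uu ν x| ≤ K := by
  set c : ℝ := |1/4 - ν^2| with hc
  set E : ℝ → ℝ := fun x => (vv ν x)^2 + (uu ν x)^2 with hE
  set W : ℝ → ℝ := fun x => E x * Real.exp (c * x⁻¹) with hW
  have key : ∀ x : ℝ, 0 < x → ∃ D : ℝ, HasDerivAt W D x ∧ D ≤ 0 := by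
    intro x hx
    have hu := hasDerivAt_uu ν hν hx
    have hv := hasDerivAt_vv ν hν hx
    have hE' : HasDerivAt E (2 * vv ν x * ww ν x + 2 * uu ν x * vv ν x) x := by
      have h1 : HasDerivAt (fun y => (vv ν y)^2) (2 * vv ν x * ww ν x) x := by
        have := hv.pow 2
        refine this.congr_deriv ?_
        norm_num
      have h2 : HasDerivAt (fun y => (uu ν y)^2) (2 * uu ν x * vv ν x) x := by
        have := hu.pow 2
        refine this.congr_deriv ?_
        norm_num
      exact h1.add h2
    have hexp : HasDerivAt (fun y : ℝ => Real.exp (c * y⁻¹))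
        (Real.exp (c * x⁻¹) * (c * (-(x^2)⁻¹))) x :=
      ((hasDerivAt_inv hx.ne').const_mul c).exp
    have hWd : HasDerivAt W
        ((2 * vv ν x * ww ν x + 2 * uu ν x * vv ν x) * Real.exp (c * x⁻¹)
          + E x * (Real.exp (c * x⁻¹) * (c * (-(x^2)⁻¹)))) x := hE'.mul hexp
    refine ⟨_, hWd, ?_⟩
    rw [uu_ode ν hν hx]
    set u := uu ν x
    set v := vv ν x
    have hx2 : (0:ℝ) < x^2 := by positivity
    have hexp0 : (0:ℝ) < Real.exp (c * x⁻¹) := Real.exp_pos _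
    have hEx : E x = v^2 + u^2 := rfl
    rw [hEx]
    have heq : (2 * v * (-(1 + (1/4 - ν^2)/x^2) * u) + 2 * u * v) * Real.exp (c * x⁻¹)
        + (v^2 + u^2) * (Real.exp (c * x⁻¹) * (c * (-(x^2)⁻¹)))
        = (Real.exp (c * x⁻¹) / x^2) * (-2 * (1/4 - ν^2) * u * v - c * (v^2 + u^2)) := by
      field_simp
      ring
    rw [heq]
    apply mul_nonpos_of_nonneg_of_nonpos (by positivity)
    have h1 : (1/4 - ν^2) ≤ c := le_abs_self _
    have h2 : -c ≤ (1/4 - ν^2) := neg_abs_le _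
    nlinarith [sq_nonneg (u + v), sq_nonneg (u - v)]
  have hanti : AntitoneOn W (Ici 1) := by
    apply antitoneOn_of_deriv_nonpos (convex_Ici 1)
    · intro x hx
      have hx0 : (0:ℝ) < x := lt_of_lt_of_le one_pos hx
      obtain ⟨D, hD, _⟩ := key x hx0
      exact hD.continuousAt.continuousWithinAt
    · intro x hx
      rw [interior_Ici] at hx
      have hx0 : (0:ℝ) < x := lt_trans one_pos hx
      obtain ⟨D, hD, _⟩ := key x hx0
      exact hD.differentiableAt.differentiableWithinAt
    · intro x hx
      rw [interior_Ici] at hx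
      have hx0 : (0:ℝ) < x := lt_trans one_pos hx
      obtain ⟨D, hD, hD0⟩ := key x hx0
      rw [hD.deriv]
      exact hD0
  refine ⟨Real.sqrt (E 1 * Real.exp c), Real.sqrt_nonneg _, fun x hx => ?_⟩
  have hWx : W x ≤ W 1 := hanti (mem_Ici.mpr le_rfl) (mem_Ici.mpr hx) hx
  have hx0 : (0:ℝ) < x := lt_of_lt_of_le one_pos hx
  have hEnn : 0 ≤ E x := by positivity
  have hexp1 : (1:ℝ) ≤ Real.exp (c * x⁻¹) := by
    rw [Real.one_le_exp_iff]
    positivity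
  have hEW : E x ≤ W x := by
    calc E x = E x * 1 := (mul_one _).symm
    _ ≤ E x * Real.exp (c * x⁻¹) := mul_le_mul_of_nonneg_left hexp1 hEnn
  have hW1 : W 1 = E 1 * Real.exp c := by simp [hW]
  have husq : (uu ν x)^2 ≤ E 1 * Real.exp c := by
    have : (uu ν x)^2 ≤ E x := by
      simp only [hE]
      nlinarith [sq_nonneg (vv ν x)]
    linarith [hEW, hWx, hW1 ▸ hWx]
  calc |uu ν x| = Real.sqrt ((uu ν x)^2) := (Real.sqrt_sq_eq_abs _).symm
  _ ≤ Real.sqrt (E 1 * Real.exp c) := Real.sqrt_le_sqrt husq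

lemma besselJ_eq (ν x : ℝ) : besselJ ν x = (x/2) ^ ν * gg ν x := by
  unfold besselJ gg
  rw [← tsum_mul_left]
  congr 1
  funext m
  have h4 : ((2:ℝ))^(2*m) = 4^m := by rw [pow_mul]; norm_num
  have : (x/2)^(2*m) = x^(2*m)/4^m := by rw [div_pow, h4]
  rw [this]
  unfold bb
  ring

/-- bound for `r^{1-d}|kernelV d r|` on `(0,1]`. -/
lemma kernel_bound_small (d : ℕ) (hd : 2 ≤ d) :
    ∃ M : ℝ, 0 ≤ M ∧ ∀ r : ℝ, 0 < r → r ≤ 1 →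
      r ^ (1 - (d:ℝ)) * |kernelV d r| ≤ M := by
  set ν : ℝ := ((d:ℝ) - 2)/2 with hνdef
  have hd2 : (2:ℝ) ≤ (d:ℝ) := by exact_mod_cast hd
  have hν : 0 ≤ ν := by rw [hνdef]; linarith
  obtain ⟨K₀, hK₀⟩ := (isCompact_Icc (a := (0:ℝ)) (b := 1)).exists_bound_of_continuousOn
    (continuous_gg ν hν).continuousOn
  have hK₀0 : 0 ≤ K₀ := le_trans (norm_nonneg _) (hK₀ 0 (by norm_num))
  refine ⟨(2*π) ^ ((d:ℝ)/2) * K₀, by positivity, fun r hr hr1 => ?_⟩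
  have habs : |kernelV d r| = (2*π) ^ ((d:ℝ)/2) * ((r/2) ^ ν * |gg ν r|) * r ^ ((d:ℝ)/2) := by
    unfold kernelV
    rw [besselJ_eq, abs_mul, abs_mul, abs_mul,
      abs_of_nonneg (by positivity : (0:ℝ) ≤ (2*π) ^ ((d:ℝ)/2)),
      abs_of_nonneg (Real.rpow_nonneg (by linarith) ν),
      abs_of_nonneg (Real.rpow_nonneg hr.le _)]
  rw [habs]
  have hhalf : (r/2) ^ ν ≤ r ^ ν := Real.rpow_le_rpow (by linarith) (by linarith) hν
  have hgb : |gg ν r| ≤ K₀ := by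
    have := hK₀ r ⟨hr.le, hr1⟩
    rwa [Real.norm_eq_abs] at this
  calc r ^ (1-(d:ℝ)) * ((2*π) ^ ((d:ℝ)/2) * ((r/2) ^ ν * |gg ν r|) * r ^ ((d:ℝ)/2))
      ≤ r ^ (1-(d:ℝ)) * ((2*π) ^ ((d:ℝ)/2) * (r ^ ν * K₀) * r ^ ((d:ℝ)/2)) := by
        apply mul_le_mul_of_nonneg_left _ (Real.rpow_nonneg hr.le _)
        apply mul_le_mul_of_nonneg_right _ (Real.rpow_nonneg hr.le _)
        apply mul_le_mul_of_nonneg_left _ (by positivity)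
        apply mul_le_mul hhalf hgb (abs_nonneg _) (Real.rpow_nonneg hr.le _)
    _ = (2*π) ^ ((d:ℝ)/2) * K₀ * (r ^ (1-(d:ℝ)) * r ^ ν * r ^ ((d:ℝ)/2)) := by ring
    _ = (2*π) ^ ((d:ℝ)/2) * K₀ := by
        rw [← Real.rpow_add hr, ← Real.rpow_add hr,
          show 1-(d:ℝ) + ν + (d:ℝ)/2 = 0 by rw [hνdef]; ring, Real.rpow_zero, mul_one]

/-- bound for `r^{1-d}|kernelV d r|` on `[1,∞)`. -/
lemma kernel_bound_large (d : ℕ) (hd : 2 ≤ d) :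
    ∃ M : ℝ, 0 ≤ M ∧ ∀ r : ℝ, 1 ≤ r →
      r ^ (1 - (d:ℝ)) * |kernelV d r| ≤ M * r ^ ((1 - (d:ℝ))/2) := by
  set ν : ℝ := ((d:ℝ) - 2)/2 with hνdef
  have hd2 : (2:ℝ) ≤ (d:ℝ) := by exact_mod_cast hd
  have hν : 0 ≤ ν := by rw [hνdef]; linarith
  obtain ⟨K, hK0, hK⟩ := uu_bound ν hν
  refine ⟨(2*π) ^ ((d:ℝ)/2) * K, by positivity, fun r hr => ?_⟩
  have hr0 : (0:ℝ) < r := lt_of_lt_of_le one_pos hr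
  have hgr : |gg ν r| ≤ K * r ^ (-(ν+1/2)) := by
    have huu : gg ν r = r ^ (-(ν+1/2)) * uu ν r := by
      unfold uu
      rw [← mul_assoc, ← Real.rpow_add hr0,
        show -(ν+1/2) + (ν+1/2) = (0:ℝ) by ring, Real.rpow_zero, one_mul]
    rw [huu, abs_mul, abs_of_nonneg (Real.rpow_nonneg hr0.le _), mul_comm]
    exact mul_le_mul_of_nonneg_right (hK r hr) (Real.rpow_nonneg hr0.le _)
  have habs : |kernelV d r| = (2*π) ^ ((d:ℝ)/2) * ((r/2) ^ ν * |gg ν r|) * r ^ ((d:ℝ)/2) := by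
    unfold kernelV
    rw [besselJ_eq, abs_mul, abs_mul, abs_mul,
      abs_of_nonneg (by positivity : (0:ℝ) ≤ (2*π) ^ ((d:ℝ)/2)),
      abs_of_nonneg (Real.rpow_nonneg (by linarith) ν),
      abs_of_nonneg (Real.rpow_nonneg hr0.le _)]
  rw [habs]
  have hhalf : (r/2) ^ ν ≤ r ^ ν := Real.rpow_le_rpow (by linarith) (by linarith) hν
  calc r ^ (1-(d:ℝ)) * ((2*π) ^ ((d:ℝ)/2) * ((r/2) ^ ν * |gg ν r|) * r ^ ((d:ℝ)/2))
      ≤ r ^ (1-(d:ℝ)) * ((2*π) ^ ((d:ℝ)/2) * (r ^ ν * (K * r ^ (-(ν+1/2)))) * r ^ ((d:ℝ)/2)) := by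
        apply mul_le_mul_of_nonneg_left _ (Real.rpow_nonneg hr0.le _)
        apply mul_le_mul_of_nonneg_right _ (Real.rpow_nonneg hr0.le _)
        apply mul_le_mul_of_nonneg_left _ (by positivity)
        exact mul_le_mul hhalf hgr (abs_nonneg _) (Real.rpow_nonneg hr0.le _)
    _ = (2*π) ^ ((d:ℝ)/2) * K * (r ^ (1-(d:ℝ)) * r ^ ν * r ^ (-(ν+1/2)) * r ^ ((d:ℝ)/2)) := by
        ring
    _ = (2*π) ^ ((d:ℝ)/2) * K * r ^ ((1-(d:ℝ))/2) := by
        rw [← Real.rpow_add hr0, ← Real.rpow_add hr0, ← Real.rpow_add hr0,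
          show 1-(d:ℝ) + ν + -(ν+1/2) + (d:ℝ)/2 = (1-(d:ℝ))/2 by ring]

/-- For `1 < p < 2d/(d+1)`, the radial extremal function
`F₀(r) = C (r^{1-d} |V_d(r)|)^{1/(p-1)}` lies in `L^p((0,∞), r^{d-1}dr)`:
`∫_0^∞ r^{d-1} |F₀(r)|^p dr < ∞`. -/
theorem radial_extremal_in_Lp (d : ℕ) (hd : 2 ≤ d) (p : ℝ) (hp1 : 1 < p)
    (hp2 : p < 2 * (d : ℝ) / ((d : ℝ) + 1)) (C : ℝ) :
    IntegrableOn
      (fun r => r ^ ((d : ℝ) - 1) *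
        |C * (r ^ (1 - (d : ℝ)) * |kernelV d r|) ^ (1 / (p - 1))| ^ p)
      (Ioi (0 : ℝ)) := by
  set ν : ℝ := ((d:ℝ) - 2)/2 with hνdef
  have hd2 : (2:ℝ) ≤ (d:ℝ) := by exact_mod_cast hd
  have hν : 0 ≤ ν := by rw [hνdef]; linarith
  have hp1' : (0:ℝ) < p - 1 := by linarith
  have hq : (0:ℝ) < 1/(p-1) := by positivity
  set φ : ℝ → ℝ := fun r => r ^ ((d:ℝ) - 1) *
      |C * (r ^ (1 - (d:ℝ)) * |kernelV d r|) ^ (1/(p-1))| ^ p with hφ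
  set B : ℝ → ℝ := fun r => r ^ (1 - (d:ℝ)) * |kernelV d r| with hB
  have hBnn : ∀ r : ℝ, 0 < r → 0 ≤ B r := fun r hr => by
    simp only [hB]
    positivity
  -- pointwise formula
  have hφ_eq : ∀ r : ℝ, 0 < r →
      φ r = r ^ ((d:ℝ)-1) * |C|^p * (B r) ^ (1/(p-1) * p) := by
    intro r hr
    simp only [hφ, hB]
    rw [abs_mul, abs_of_nonneg (Real.rpow_nonneg (hBnn r hr) _),
      Real.mul_rpow (abs_nonneg C) (Real.rpow_nonneg (hBnn r hr) _),
      ← Real.rpow_mul (hBnn r hr)]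
    ring
  -- continuity on Ioi 0
  have hcont : ContinuousOn φ (Ioi (0:ℝ)) := by
    have hbJ : ContinuousOn (besselJ ν) (Ioi (0:ℝ)) := by
      have : besselJ ν = fun x => (x/2) ^ ν * gg ν x := funext (besselJ_eq ν)
      rw [this]
      apply ContinuousOn.mul _ (continuous_gg ν hν).continuousOn
      apply ContinuousOn.rpow_const (continuousOn_id.div_const 2)
      intro x hx
      exact Or.inr hν
    have hkV : ContinuousOn (kernelV d) (Ioi (0:ℝ)) := by
      have : kernelV d = fun r => (2*π) ^ ((d:ℝ)/2) * besselJ ν r * r ^ ((d:ℝ)/2) := rfl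
      rw [this]
      apply ContinuousOn.mul ((continuousOn_const).mul hbJ)
      apply ContinuousOn.rpow_const continuousOn_id
      intro x hx
      exact Or.inr (by positivity)
    have hBc : ContinuousOn B (Ioi (0:ℝ)) := by
      apply ContinuousOn.mul _ hkV.abs
      apply ContinuousOn.rpow_const continuousOn_id
      intro x hx
      exact Or.inl (ne_of_gt hx)
    apply ContinuousOn.mul
    · apply ContinuousOn.rpow_const continuousOn_id
      intro x hx
      exact Or.inr (by linarith)
    · apply ContinuousOn.rpow_const _ (fun x hx => Or.inr (by linarith))
      apply ContinuousOn.abs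
      apply ContinuousOn.mul continuousOn_const
      exact ContinuousOn.rpow_const hBc (fun x hx => Or.inr hq.le)
  obtain ⟨M₁, hM₁0, hM₁⟩ := kernel_bound_small d hd
  obtain ⟨M₂, hM₂0, hM₂⟩ := kernel_bound_large d hd
  -- the exponent at infinity
  set a : ℝ := (d:ℝ) - 1 + (1-(d:ℝ))/2 * (1/(p-1) * p) with ha_def
  have hdp : (0:ℝ) < (d:ℝ) + 1 := by linarith
  have hp2' : p * ((d:ℝ)+1) < 2*(d:ℝ) := (lt_div_iff₀ hdp).mp hp2
  have ha : a < -1 := by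
    rw [ha_def]
    have h2 : (1-(d:ℝ))/2 * (1/(p-1) * p) = ((1-(d:ℝ))*p) / (2*(p-1)) := by
      field_simp
    rw [h2]
    have h3 : ((1-(d:ℝ))*p)/(2*(p-1)) < -(d:ℝ) := by
      rw [div_lt_iff₀ (by linarith : (0:ℝ) < 2*(p-1))]
      nlinarith
    linarith
  -- integrable on Ioc 0 1
  have hI1 : IntegrableOn φ (Ioc (0:ℝ) 1) := by
    apply Integrable.mono' (g := fun _ => |C|^p * M₁ ^ (1/(p-1) * p))
      (integrableOn_const measure_Ioc_lt_top.ne)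
    · exact (hcont.mono Ioc_subset_Ioi_self).aestronglyMeasurable measurableSet_Ioc
    · filter_upwards [ae_restrict_mem measurableSet_Ioc] with r hr
      obtain ⟨hr0, hr1⟩ := hr
      rw [Real.norm_eq_abs, abs_of_nonneg (by simp only [hφ]; positivity), hφ_eq r hr0]
      have h1 : r ^ ((d:ℝ)-1) ≤ 1 := Real.rpow_le_one hr0.le hr1 (by linarith)
      have h2 : (B r) ^ (1/(p-1)*p) ≤ M₁ ^ (1/(p-1)*p) :=
        Real.rpow_le_rpow (hBnn r hr0) (hM₁ r hr0 hr1) (by positivity)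
      calc r ^ ((d:ℝ)-1) * |C|^p * (B r) ^ (1/(p-1)*p)
          ≤ 1 * |C|^p * (M₁ ^ (1/(p-1)*p)) := by
            apply mul_le_mul _ h2 (Real.rpow_nonneg (hBnn r hr0) _) (by positivity)
            exact mul_le_mul_of_nonneg_right h1 (by positivity)
        _ = |C|^p * M₁ ^ (1/(p-1)*p) := by ring
  -- integrable on Ioi 1
  have hI2 : IntegrableOn φ (Ioi (1:ℝ)) := by
    apply Integrable.mono'
      (g := fun r => (|C|^p * M₂ ^ (1/(p-1) * p)) * r ^ a)
      ((integrableOn_Ioi_rpow_of_lt ha one_pos).const_mul _)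
    · exact (hcont.mono (t := Ioi (1:ℝ)) (fun x (hx : 1 < x) => (lt_trans one_pos hx : 0 < x))).aestronglyMeasurable
        measurableSet_Ioi
    · filter_upwards [ae_restrict_mem measurableSet_Ioi] with r hr
      have hr1 : (1:ℝ) ≤ r := le_of_lt hr
      have hr0 : (0:ℝ) < r := lt_trans one_pos hr
      rw [Real.norm_eq_abs, abs_of_nonneg (by simp only [hφ]; positivity), hφ_eq r hr0]
      have h2 : (B r) ^ (1/(p-1)*p) ≤ (M₂ * r ^ ((1-(d:ℝ))/2)) ^ (1/(p-1)*p) :=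
        Real.rpow_le_rpow (hBnn r hr0) (hM₂ r hr1) (by positivity)
      have h3 : (M₂ * r ^ ((1-(d:ℝ))/2)) ^ (1/(p-1)*p)
          = M₂ ^ (1/(p-1)*p) * r ^ ((1-(d:ℝ))/2 * (1/(p-1)*p)) := by
        rw [Real.mul_rpow hM₂0 (Real.rpow_nonneg hr0.le _), ← Real.rpow_mul hr0.le]
      calc r ^ ((d:ℝ)-1) * |C|^p * (B r) ^ (1/(p-1)*p)
          ≤ r ^ ((d:ℝ)-1) * |C|^p * (M₂ ^ (1/(p-1)*p) * r ^ ((1-(d:ℝ))/2 * (1/(p-1)*p))) := by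
            rw [← h3]
            exact mul_le_mul_of_nonneg_left h2 (by positivity)
        _ = (|C|^p * M₂ ^ (1/(p-1)*p)) * (r ^ ((d:ℝ)-1) * r ^ ((1-(d:ℝ))/2 * (1/(p-1)*p))) := by
            ring
        _ = (|C|^p * M₂ ^ (1/(p-1)*p)) * r ^ a := by
            rw [← Real.rpow_add hr0, ha_def]
  have := hI1.union hI2
  rwa [Ioc_union_Ioi_eq_Ioi (le_of_lt one_pos)] at this
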